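/- Let b₁ be a para-accretive function on ℝⁿ, {S_j} an approximation to the identity associated to b₁ with regularity ε, D_j = S_j − S_{j−1}, and N ∈ ℕ. Let H^N_j(x,y) = ∫ D_j(x,z) b₁(z) S_{j−N−1}(z,y) b₁(y) dz be the kernel of D_j M_{b₁} S_{j−N−1} M_{b₁}. Then |H^N_j(x,y)| ≤ C 2^{−Nε} 2^{(j−N)n} for all x, y, and H^N_j(x,y) = 0 whenever |x−y| ≥ C 2^{−(j−N)}. -/

import Mathlib

/-!
Because `∫ D_j(x,z) b₁(z) dz = 0`, the factor `S_{j-N-1}(z,y)` may be replaced by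
`S_{j-N-1}(z,y) - S_{j-N-1}(x,y)`. On the support `|x - z| ≲ 2^{-j}` of `D_j`, Hölder regularity
of `S_{j-N-1}` in its first variable bounds this difference by `2^{(j-N)(n+ε)} 2^{-jε}`, and
integrating `|D_j| ≲ 2^{jn}` over a ball of volume `≈ 2^{-jn}` leaves `2^{-Nε} 2^{(j-N)n}`.
The support statement is the triangle inequality between the supports of `D_j` and `S_{j-N-1}`.
-/

open MeasureTheory

noncomputable abbrev E (n : ℕ) := EuclideanSpace ℝ (Fin n)

def IsApproxId (n : ℕ) (Ca ε : ℝ) (b : E n → ℂ) (S : ℤ → E n → E n → ℂ) : Prop :=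
  (∀ j : ℤ, Measurable (Function.uncurry (S j))) ∧
  (∀ (j : ℤ) (x y : E n), ‖S j x y‖ ≤ Ca * (2:ℝ) ^ ((j:ℝ) * n)) ∧
  (∀ (j : ℤ) (x y : E n), Ca * (2:ℝ) ^ (-(j:ℝ)) ≤ ‖x - y‖ → S j x y = 0) ∧
  (∀ (j : ℤ) (x x' y : E n),
      ‖S j x y - S j x' y‖ ≤ Ca * (2:ℝ) ^ ((j:ℝ) * ((n:ℝ) + ε)) * ‖x - x'‖ ^ ε) ∧
  (∀ (j : ℤ) (x y y' : E n),
      ‖S j x y - S j x y'‖ ≤ Ca * (2:ℝ) ^ ((j:ℝ) * ((n:ℝ) + ε)) * ‖y - y'‖ ^ ε) ∧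
  (∀ (j : ℤ) (x x' y y' : E n), ‖S j x y - S j x y' - (S j x' y - S j x' y')‖ ≤
      Ca * (2:ℝ) ^ ((j:ℝ) * ((n:ℝ) + 2*ε)) * ‖x - x'‖ ^ ε * ‖y - y'‖ ^ ε) ∧
  (∀ (j : ℤ) (x : E n), (∫ y, S j x y * b y) = 1) ∧
  (∀ (j : ℤ) (y : E n), (∫ x, S j x y * b x) = 1)

open Metric

section BoundedSupport

variable {X F : Type*} [MeasurableSpace X] [NormedAddCommGroup F]
  {μ : Measure X} {f : X → F} {s : Set X} {M : ℝ}

theorem integrable_of_norm_le_of_eq_zero_off (hf : AEStronglyMeasurable f μ)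
    (hs : MeasurableSet s) (hμs : μ s ≠ ⊤) (hM : ∀ x ∈ s, ‖f x‖ ≤ M)
    (hzero : ∀ x ∉ s, f x = 0) : Integrable f μ :=
  (Measure.integrableOn_of_bounded hμs hf ((ae_restrict_iff' hs).2 (ae_of_all _ hM))
    ).integrable_of_forall_notMem_eq_zero hzero

theorem norm_integral_le_of_norm_le_of_eq_zero_off [NormedSpace ℝ F] (hμs : μ s < ⊤)
    (hM : ∀ x ∈ s, ‖f x‖ ≤ M) (hzero : ∀ x ∉ s, f x = 0) :
    ‖∫ x, f x ∂μ‖ ≤ M * μ.real s := by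
  rw [← setIntegral_eq_integral_of_forall_compl_eq_zero hzero]
  exact norm_setIntegral_le_of_norm_le_const hμs hM

end BoundedSupport

namespace IsApproxId

variable {n : ℕ} {Ca ε B : ℝ} {b : E n → ℂ} {S : ℤ → E n → E n → ℂ}

theorem measurable_right (hS : IsApproxId n Ca ε b S) (j : ℤ) (x : E n) : Measurable (S j x) :=
  (hS.1 j).comp measurable_prodMk_left

theorem measurable_left (hS : IsApproxId n Ca ε b S) (j : ℤ) (y : E n) :
    Measurable fun x => S j x y :=
  (hS.1 j).comp measurable_prodMk_right

theorem norm_le (hS : IsApproxId n Ca ε b S) (j : ℤ) (x y : E n) :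
    ‖S j x y‖ ≤ Ca * (2:ℝ) ^ ((j:ℝ) * n) :=
  hS.2.1 j x y

theorem eq_zero_of_le_norm_sub (hS : IsApproxId n Ca ε b S) {j : ℤ} {x y : E n}
    (h : Ca * (2:ℝ) ^ (-(j:ℝ)) ≤ ‖x - y‖) : S j x y = 0 :=
  hS.2.2.1 j x y h

theorem norm_sub_left_le (hS : IsApproxId n Ca ε b S) (j : ℤ) (x x' y : E n) :
    ‖S j x y - S j x' y‖ ≤ Ca * (2:ℝ) ^ ((j:ℝ) * ((n:ℝ) + ε)) * ‖x - x'‖ ^ ε :=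
  hS.2.2.2.1 j x x' y

theorem integral_mul_right_eq_one (hS : IsApproxId n Ca ε b S) (j : ℤ) (x : E n) :
    ∫ y, S j x y * b y = 1 :=
  hS.2.2.2.2.2.2.1 j x

theorem nonneg (hS : IsApproxId n Ca ε b S) : 0 ≤ Ca :=
  nonneg_of_mul_nonneg_left ((norm_nonneg _).trans (hS.norm_le 0 0 0)) (by positivity)

theorem integrable_mul (hS : IsApproxId n Ca ε b S) (hbm : Measurable b)
    (hb : ∀ z, ‖b z‖ ≤ B) (j : ℤ) (x : E n) : Integrable fun z => S j x z * b z := by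
  refine integrable_of_norm_le_of_eq_zero_off (s := closedBall x (Ca * 2 ^ (-(j:ℝ))))
    (M := Ca * 2 ^ ((j:ℝ) * n) * B) ((hS.measurable_right j x).mul hbm).aestronglyMeasurable
    measurableSet_closedBall measure_closedBall_lt_top.ne (fun z _ => ?_) fun z hz => ?_
  · rw [norm_mul]
    exact mul_le_mul (hS.norm_le j x z) (hb z) (norm_nonneg _)
      (mul_nonneg hS.nonneg (by positivity))
  · rw [mem_closedBall, dist_comm, dist_eq_norm, not_le] at hz
    rw [hS.eq_zero_of_le_norm_sub hz.le, zero_mul]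

theorem sub_pred_eq_zero_of_le_norm_sub (hS : IsApproxId n Ca ε b S) {j : ℤ} {x z : E n}
    (h : Ca * (2:ℝ) ^ (1 - (j:ℝ)) ≤ ‖x - z‖) : S j x z - S (j - 1) x z = 0 := by
  have hj : Ca * (2:ℝ) ^ (-(j:ℝ)) ≤ ‖x - z‖ :=
    le_trans (by gcongr; exacts [hS.nonneg, one_le_two, by linarith]) h
  have hj1 : Ca * (2:ℝ) ^ (-((j - 1 : ℤ) : ℝ)) ≤ ‖x - z‖ := by
    convert h using 3; push_cast; ring
  rw [hS.eq_zero_of_le_norm_sub hj, hS.eq_zero_of_le_norm_sub hj1, sub_zero]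

theorem norm_sub_pred_le (hS : IsApproxId n Ca ε b S) (j : ℤ) (x z : E n) :
    ‖S j x z - S (j - 1) x z‖ ≤ 2 * Ca * (2:ℝ) ^ ((j:ℝ) * n) := by
  have hpred : Ca * (2:ℝ) ^ (((j - 1 : ℤ) : ℝ) * n) ≤ Ca * (2:ℝ) ^ ((j:ℝ) * n) := by
    gcongr
    exacts [hS.nonneg, one_le_two, by nlinarith [(Nat.cast_nonneg n : (0:ℝ) ≤ n)]]
  calc ‖S j x z - S (j - 1) x z‖ ≤ ‖S j x z‖ + ‖S (j - 1) x z‖ := norm_sub_le _ _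
    _ ≤ 2 * Ca * (2:ℝ) ^ ((j:ℝ) * n) := by linarith [hS.norm_le j x z, hS.norm_le (j - 1) x z]

theorem integrable_sub_pred_mul (hS : IsApproxId n Ca ε b S) (hbm : Measurable b)
    (hb : ∀ z, ‖b z‖ ≤ B) (j : ℤ) (x : E n) :
    Integrable fun z => (S j x z - S (j - 1) x z) * b z := by
  simpa only [sub_mul, Pi.sub_def] using
    (hS.integrable_mul hbm hb j x).sub (hS.integrable_mul hbm hb (j - 1) x)

theorem integral_sub_pred_mul_eq_zero (hS : IsApproxId n Ca ε b S) (hbm : Measurable b)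
    (hb : ∀ z, ‖b z‖ ≤ B) (j : ℤ) (x : E n) :
    ∫ z, (S j x z - S (j - 1) x z) * b z = 0 := by
  simp_rw [sub_mul]
  rw [integral_sub (hS.integrable_mul hbm hb j x) (hS.integrable_mul hbm hb (j - 1) x),
    hS.integral_mul_right_eq_one, hS.integral_mul_right_eq_one, sub_self]

theorem norm_sub_pred_mul_sub_le (hS : IsApproxId n Ca ε b S) (hε : 0 ≤ ε)
    (hb : ∀ z, ‖b z‖ ≤ B) {j k : ℤ} {x y z : E n} {R : ℝ} (hz : ‖z - x‖ ≤ R) :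
    ‖(S j x z - S (j - 1) x z) * b z * ((S k z y - S k x y) * b y)‖ ≤
      2 * Ca * (2:ℝ) ^ ((j:ℝ) * n) * B * (Ca * (2:ℝ) ^ ((k:ℝ) * ((n:ℝ) + ε)) * R ^ ε * B) := by
  have hB : 0 ≤ B := (norm_nonneg _).trans (hb 0)
  have hCa := hS.nonneg
  have hR : 0 ≤ R := (norm_nonneg _).trans hz
  have hHolder : ‖S k z y - S k x y‖ ≤ Ca * (2:ℝ) ^ ((k:ℝ) * ((n:ℝ) + ε)) * R ^ ε :=
    (hS.norm_sub_left_le k z x y).trans (by gcongr)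
  simp only [norm_mul]
  gcongr
  exacts [hS.norm_sub_pred_le j x z, hb z, hb y]

theorem norm_integral_sub_pred_mul_le (hS : IsApproxId n Ca ε b S) (hε : 0 ≤ ε)
    (hbm : Measurable b) (hb : ∀ z, ‖b z‖ ≤ B) (j k : ℤ) (x y : E n) :
    ‖∫ z, (S j x z - S (j - 1) x z) * b z * (S k z y * b y)‖ ≤
      2 * Ca ^ 2 * B ^ 2 * Ca ^ ε * Ca ^ n * volume.real (closedBall (0 : E n) 1) *
        (2:ℝ) ^ (((k:ℝ) + 1 - j) * ε) * (2:ℝ) ^ (((k:ℝ) + 1) * n) := by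
  have hCa := hS.nonneg
  set R := Ca * (2:ℝ) ^ (1 - (j:ℝ))
  set D := fun z => (S j x z - S (j - 1) x z) * b z
  have hD_zero : ∀ z ∉ closedBall x R, D z = 0 := fun z hz => by
    rw [mem_closedBall, dist_comm, dist_eq_norm, not_le] at hz
    simp only [D, hS.sub_pred_eq_zero_of_le_norm_sub hz.le, zero_mul]
  have hsplit : (fun z => D z * (S k z y * b y)) =
      fun z => D z * ((S k z y - S k x y) * b y) + D z * (S k x y * b y) := by
    funext z; ring
  have hmain_le : ∀ z ∈ closedBall x R, ‖D z * ((S k z y - S k x y) * b y)‖ ≤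
      2 * Ca * (2:ℝ) ^ ((j:ℝ) * n) * B * (Ca * (2:ℝ) ^ ((k:ℝ) * ((n:ℝ) + ε)) * R ^ ε * B) :=
    fun z hz => hS.norm_sub_pred_mul_sub_le hε hb (by rwa [mem_closedBall, dist_eq_norm] at hz)
  have hmain_zero : ∀ z ∉ closedBall x R, D z * ((S k z y - S k x y) * b y) = 0 :=
    fun z hz => by rw [hD_zero z hz, zero_mul]
  have hmain_int : Integrable fun z => D z * ((S k z y - S k x y) * b y) :=
    integrable_of_norm_le_of_eq_zero_off
      ((hS.integrable_sub_pred_mul hbm hb j x).aestronglyMeasurable.mul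
        (((hS.measurable_left k y).sub measurable_const).mul measurable_const).aestronglyMeasurable)
      measurableSet_closedBall measure_closedBall_lt_top.ne hmain_le hmain_zero
  have hconst_int : Integrable fun z => D z * (S k x y * b y) :=
    (hS.integrable_sub_pred_mul hbm hb j x).mul_const _
  have hconst_zero : ∫ z, D z * (S k x y * b y) = 0 := by
    rw [integral_mul_const, hS.integral_sub_pred_mul_eq_zero hbm hb j x, zero_mul]
  have hvol : volume.real (closedBall x R) = R ^ n * volume.real (closedBall (0 : E n) 1) := by
    rw [Measure.addHaar_real_closedBall' _ _ (by positivity), finrank_euclideanSpace_fin]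
  have hRε : R ^ ε = Ca ^ ε * (2:ℝ) ^ ((1 - (j:ℝ)) * ε) := by
    rw [Real.mul_rpow hCa (by positivity), ← Real.rpow_mul zero_le_two]
  have hRn : R ^ n = Ca ^ n * (2:ℝ) ^ ((1 - (j:ℝ)) * n) := by
    rw [mul_pow, Real.rpow_mul_natCast zero_le_two]
  have hexp : (2:ℝ) ^ ((j:ℝ) * n) * (2:ℝ) ^ ((k:ℝ) * ((n:ℝ) + ε)) *
      (2:ℝ) ^ ((1 - (j:ℝ)) * ε) * (2:ℝ) ^ ((1 - (j:ℝ)) * n) =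
      (2:ℝ) ^ (((k:ℝ) + 1 - j) * ε) * (2:ℝ) ^ (((k:ℝ) + 1) * n) := by
    simp only [← Real.rpow_add two_pos]
    ring_nf
  calc ‖∫ z, D z * (S k z y * b y)‖
      = ‖∫ z, D z * ((S k z y - S k x y) * b y)‖ := by
        rw [hsplit, integral_add hmain_int hconst_int, hconst_zero, add_zero]
    _ ≤ 2 * Ca * (2:ℝ) ^ ((j:ℝ) * n) * B * (Ca * (2:ℝ) ^ ((k:ℝ) * ((n:ℝ) + ε)) * R ^ ε * B) *
          volume.real (closedBall x R) :=
        norm_integral_le_of_norm_le_of_eq_zero_off measure_closedBall_lt_top hmain_le hmain_zero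
    _ = _ := by
        rw [hvol, hRε, hRn]
        linear_combination
          (2 * Ca ^ 2 * B ^ 2 * Ca ^ ε * Ca ^ n * volume.real (closedBall (0 : E n) 1)) * hexp

theorem integral_sub_pred_mul_eq_zero_of_le_norm_sub (hS : IsApproxId n Ca ε b S) {j k : ℤ}
    {x y : E n} (h : Ca * (2:ℝ) ^ (1 - (j:ℝ)) + Ca * (2:ℝ) ^ (-(k:ℝ)) ≤ ‖x - y‖) :
    ∫ z, (S j x z - S (j - 1) x z) * b z * (S k z y * b y) = 0 := by
  have hpointwise : ∀ z, (S j x z - S (j - 1) x z) * b z * (S k z y * b y) = 0 := fun z => by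
    rcases le_or_gt (Ca * (2:ℝ) ^ (1 - (j:ℝ))) ‖x - z‖ with hxz | hxz
    · rw [hS.sub_pred_eq_zero_of_le_norm_sub hxz, zero_mul, zero_mul]
    · have hzy : Ca * (2:ℝ) ^ (-(k:ℝ)) ≤ ‖z - y‖ := by
        linarith [norm_sub_le_norm_sub_add_norm_sub x z y]
      rw [hS.eq_zero_of_le_norm_sub hzy, zero_mul, mul_zero]
  simp only [hpointwise, integral_zero]

end IsApproxId

theorem tb_product_HNj_size_and_support
    (n : ℕ) (ε : ℝ) (hε : 0 < ε)
    (b₁ : E n → ℂ) (B : ℝ) (hb₁m : Measurable b₁) (hb₁ : ∀ x, ‖b₁ x‖ ≤ B)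
    (Ca : ℝ) (hCa : 0 < Ca)
    (S : ℤ → E n → E n → ℂ) (hS : IsApproxId n Ca ε b₁ S) :
    ∃ C : ℝ, 0 < C ∧ ∀ (N : ℕ) (j : ℤ) (x y : E n),
      ‖∫ z, (S j x z - S (j-1) x z) * b₁ z * (S (j - N - 1) z y * b₁ y)‖ ≤
        C * (2:ℝ) ^ (-(N:ℝ) * ε) * (2:ℝ) ^ (((j:ℝ) - (N:ℝ)) * n) ∧
      (C * (2:ℝ) ^ (-((j:ℝ) - (N:ℝ))) ≤ ‖x - y‖ →
        (∫ z, (S j x z - S (j-1) x z) * b₁ z * (S (j - N - 1) z y * b₁ y)) = 0) := by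
  set K := 2 * Ca ^ 2 * B ^ 2 * Ca ^ ε * Ca ^ n * volume.real (closedBall (0 : E n) 1)
  have hK : 0 ≤ K := by positivity
  refine ⟨K + 4 * Ca, by positivity, fun N j x y => ⟨?_, fun hxy => ?_⟩⟩
  · calc _ ≤ K * (2:ℝ) ^ (-(N:ℝ) * ε) * (2:ℝ) ^ (((j:ℝ) - (N:ℝ)) * n) := by
          convert hS.norm_integral_sub_pred_mul_le hε.le hb₁m hb₁ j (j - N - 1) x y using 4 <;>
            push_cast <;> ring
      _ ≤ _ := by gcongr; linarith
  · set t := (2:ℝ) ^ (-((j:ℝ) - N))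
    have hscale_D : (2:ℝ) ^ (1 - (j:ℝ)) ≤ 2 * t := calc
      (2:ℝ) ^ (1 - (j:ℝ)) ≤ (2:ℝ) ^ (1 + -((j:ℝ) - N)) :=
        Real.rpow_le_rpow_of_exponent_le one_le_two (by linarith [N.cast_nonneg (α := ℝ)])
      _ = 2 * t := by rw [Real.rpow_add two_pos, Real.rpow_one]
    have hscale_S : (2:ℝ) ^ (-((j - N - 1 : ℤ) : ℝ)) = 2 * t := by
      rw [show -((j - N - 1 : ℤ) : ℝ) = 1 + -((j:ℝ) - N) by push_cast; ring,
        Real.rpow_add two_pos, Real.rpow_one]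
    apply hS.integral_sub_pred_mul_eq_zero_of_le_norm_sub
    rw [hscale_S]
    nlinarith [mul_le_mul_of_nonneg_left hscale_D hCa.le, mul_nonneg hK (by positivity : 0 ≤ t)]
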